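/- arXiv:1508.01252 — 6 statements merged into one kernel-verified Lean document; each statement's English description precedes it below -/
import Mathlib

section
/- If P is a prime m-Dyck path and Q is any m-Dyck path, then for any 1 ≤ j ≤ L(P), the path P ×_j Q is prime. -/
def stepVal (m : ℕ) (b : Bool) : ℤ := if b then (m : ℤ) else -1

def pathSum (m : ℕ) (P : List Bool) : ℤ := (P.map (stepVal m)).sum

def IsDyck (m : ℕ) (P : List Bool) : Prop :=
  pathSum m P = 0 ∧ ∀ Q : List Bool, Q <+: P → 0 ≤ pathSum m Q

def IsPrimePath (m : ℕ) (P : List Bool) : Prop :=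
  P ≠ [] ∧ ¬ ∃ Q R : List Bool, Q ≠ [] ∧ R ≠ [] ∧ IsDyck m Q ∧ IsDyck m R ∧ P = Q ++ R

/-- `L(P)`: the number of down steps of maximal level, i.e. the trailing down steps. -/
def Ltop (P : List Bool) : ℕ := (P.reverse.takeWhile (fun b => !b)).length

/-- The `j`-th concatenation `P ×_j Q`: insert `Q` before the last `j`
top-level down steps of `P`. -/
def concatAt (P Q : List Bool) (j : ℕ) : List Bool :=
  P.take (P.length - j) ++ Q ++ List.replicate j false

/-!
Write `P = B ++ D^j` with `D` the down step. Since `P` is prime, every nonempty prefix of `B`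
lies strictly above level `0`, and `B` ends at level `j ≥ 1`. In `B ++ Q ++ D^j` the prefixes
inside `B` are positive, those reaching into `Q` stay at level `≥ j`, and the final down steps
reach level `0` only at the very end; a Dyck path returning to `0` only at its end is prime.
-/

theorem List.prefix_or_eq_append_of_prefix_append {α : Type*} {S X Y : List α}
    (h : S <+: X ++ Y) : S <+: X ∨ ∃ T, T <+: Y ∧ S = X ++ T := by
  rcases List.prefix_or_prefix_of_prefix h (List.prefix_append X Y) with hSX | ⟨T, rfl⟩
  · exact Or.inl hSX
  · exact Or.inr ⟨T, (List.prefix_append_right_inj X).mp h, rfl⟩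

theorem eq_take_append_replicate_of_le_Ltop {P : List Bool} {j : ℕ} (h : j ≤ Ltop P) :
    P = P.take (P.length - j) ++ List.replicate j false := by
  have htop : List.replicate (Ltop P) false <:+ P := by
    have hall : ∀ b ∈ P.reverse.takeWhile (fun b => !b), b = false := fun b hb => by
      simpa using List.mem_takeWhile_imp hb
    rw [← List.reverse_prefix, List.reverse_replicate, Ltop,
      ← List.eq_replicate_iff.mpr ⟨rfl, hall⟩]
    exact List.takeWhile_prefix _
  have hj : List.replicate j false <:+ P :=
    (List.suffix_replicate_iff.mpr ⟨by simpa using h, by simp⟩).trans htop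
  have hdrop := List.suffix_iff_eq_drop.mp hj
  rw [List.length_replicate] at hdrop
  conv_lhs => rw [← List.take_append_drop (P.length - j) P, ← hdrop]

section

variable {m : ℕ}

theorem pathSum_append (X Y : List Bool) : pathSum m (X ++ Y) = pathSum m X + pathSum m Y := by
  simp [pathSum]

theorem pathSum_replicate_false (k : ℕ) : pathSum m (List.replicate k false) = -k := by
  simp [pathSum, stepVal]

theorem isDyck_of_pathSum_pos {P : List Bool} (h0 : pathSum m P = 0)
    (hpos : ∀ S, S <+: P → S ≠ [] → S ≠ P → 0 < pathSum m S) : IsDyck m P := by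
  refine ⟨h0, fun S hS => ?_⟩
  rcases eq_or_ne S [] with rfl | hne
  · rfl
  rcases eq_or_ne S P with rfl | hnP
  · exact h0.ge
  · exact (hpos S hS hne hnP).le

theorem IsDyck.isPrimePath_iff {P : List Bool} (hP : IsDyck m P) :
    IsPrimePath m P ↔ P ≠ [] ∧ ∀ S, S <+: P → S ≠ [] → S ≠ P → 0 < pathSum m S := by
  refine and_congr_right fun _ => ⟨fun hprime S hS hne hnP => ?_, ?_⟩
  · refine (hP.2 S hS).lt_of_ne fun hS0 => hprime ?_
    obtain ⟨R, rfl⟩ := hS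
    have hR0 : pathSum m R = 0 := by linarith [pathSum_append (m := m) S R, hP.1]
    refine ⟨S, R, hne, fun hR => hnP (by simp [hR]), ⟨hS0.symm, fun T hT => ?_⟩,
      ⟨hR0, fun T hT => ?_⟩, rfl⟩
    · exact hP.2 T (hT.trans (List.prefix_append S R))
    · have := hP.2 (S ++ T) ((List.prefix_append_right_inj S).mpr hT)
      linarith [pathSum_append (m := m) S T]
  · rintro hpos ⟨X, Y, hX, hY, hXd, -, rfl⟩
    exact (hpos X (List.prefix_append X Y) hX (by simpa using hY)).ne' hXd.1

theorem pathSum_pos_of_prefix_append_append_replicate {B Q S : List Bool} {j : ℕ} (hj : 0 < j)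
    (hB : ∀ S, S <+: B → S ≠ [] → 0 < pathSum m S) (hBsum : pathSum m B = j) (hQ : IsDyck m Q)
    (hS : S <+: B ++ Q ++ List.replicate j false) (hne : S ≠ [])
    (hnP : S ≠ B ++ Q ++ List.replicate j false) : 0 < pathSum m S := by
  rw [List.append_assoc] at hS hnP
  rcases List.prefix_or_eq_append_of_prefix_append hS with hSB | ⟨T, hT, rfl⟩
  · exact hB S hSB hne
  rw [pathSum_append, hBsum]
  rcases List.prefix_or_eq_append_of_prefix_append hT with hTQ | ⟨U, hU, rfl⟩
  · have := hQ.2 T hTQ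
    omega
  obtain ⟨hUj, hUrep⟩ := List.prefix_replicate_iff.mp hU
  have hUlt : U.length < j := lt_of_le_of_ne hUj fun h => hnP (by rw [hUrep, h])
  rw [pathSum_append, hQ.1, hUrep, pathSum_replicate_false]
  omega

end

theorem concat_prime_general (m : ℕ) (P Q : List Bool)
    (hP : IsDyck m P) (hPprime : IsPrimePath m P) (hQ : IsDyck m Q)
    (j : ℕ) (h1 : 1 ≤ j) (h2 : j ≤ Ltop P) :
    IsDyck m (concatAt P Q j) ∧ IsPrimePath m (concatAt P Q j) := by
  set B := P.take (P.length - j)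
  have hPB : P = B ++ List.replicate j false := eq_take_append_replicate_of_le_Ltop h2
  have hBsum : pathSum m B = j := by
    linarith [hP.1, congrArg (pathSum m) hPB, pathSum_append (m := m) B (List.replicate j false),
      pathSum_replicate_false (m := m) j]
  have hBpos : ∀ S, S <+: B → S ≠ [] → 0 < pathSum m S := by
    refine fun S hS hne => ((hP.isPrimePath_iff.mp hPprime).2 S ?_ hne ?_)
    · exact hPB ▸ hS.trans (List.prefix_append _ _)
    · rintro rfl
      have hlen := congrArg List.length hPB
      simp only [List.length_append, List.length_replicate] at hlen
      have := hS.length_le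
      omega
  have hpos := fun S => pathSum_pos_of_prefix_append_append_replicate (S := S) h1 hBpos hBsum hQ
  have hsum : pathSum m (concatAt P Q j) = 0 := by
    simp only [concatAt, pathSum_append, hBsum, hQ.1, pathSum_replicate_false, B]
    ring
  have hDyck := isDyck_of_pathSum_pos hsum hpos
  exact ⟨hDyck, hDyck.isPrimePath_iff.mpr ⟨by simp [concatAt]; omega, hpos⟩⟩

/-- If `P` is a prime `m`-Dyck path and `Q` any `m`-Dyck path, then for
`1 ≤ j ≤ L(P)`, the `m`-Dyck path `P ×_j Q` is prime. -/
theorem concat_prime (m : ℕ) (hm : 1 ≤ m) (P Q : List Bool)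
    (hP : IsDyck m P) (hPprime : IsPrimePath m P) (hQ : IsDyck m Q)
    (j : ℕ) (h1 : 1 ≤ j) (h2 : j ≤ Ltop P) :
    IsDyck m (concatAt P Q j) ∧ IsPrimePath m (concatAt P Q j) :=
  concat_prime_general m P Q hP hPprime hQ j h1 h2
end

section
/- A Dyck^1 algebra is exactly a dendriform algebra: setting ≻ := *_0 and ≺ := *_1, the Dyck^1 axioms are equivalent to the dendriform axioms x≻(y≻z) = (x≻y + x≺y)≻z, x≻(y≺z) = (x≻y)≺z, and x≺(y≻z + y≺z) = (x≺y)≺z. -/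
/-- The purely relational axioms of a `Dyck^m` algebra. -/
def DyckRels {D : Type*} [AddCommGroup D] (m : ℕ) (ops : ℕ → D → D → D) : Prop :=
  (∀ i j, i < j → j ≤ m → ∀ x y z : D, ops i x (ops j y z) = ops j (ops i x y) z) ∧
  (∀ i, i ≤ m → ∀ x y z : D,
      ∑ j ∈ Finset.range (i + 1), ops i x (ops j y z)
        = ∑ k ∈ Finset.Icc i m, ops i (ops k x y) z)

/-- A `Dyck^1` algebra is exactly a dendriform algebra: with `≻ := *_0` and
`≺ := *_1`, the `Dyck^1` axioms are equivalent to the dendriform axioms. -/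
theorem dyck1_iff_dendriform {K : Type*} [Field K] {D : Type*} [AddCommGroup D]
    [Module K D] (succ prec : D → D → D)
    (hs1 : ∀ x x' y : D, succ (x + x') y = succ x y + succ x' y)
    (hs2 : ∀ x y y' : D, succ x (y + y') = succ x y + succ x y')
    (hs3 : ∀ (a : K) (x y : D), succ (a • x) y = a • succ x y)
    (hs4 : ∀ (a : K) (x y : D), succ x (a • y) = a • succ x y)
    (hp1 : ∀ x x' y : D, prec (x + x') y = prec x y + prec x' y)
    (hp2 : ∀ x y y' : D, prec x (y + y') = prec x y + prec x y')
    (hp3 : ∀ (a : K) (x y : D), prec (a • x) y = a • prec x y)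
    (hp4 : ∀ (a : K) (x y : D), prec x (a • y) = a • prec x y) :
    DyckRels 1 (fun i => if i = 0 then succ else prec)
      ↔ ((∀ x y z : D, succ x (succ y z) = succ (succ x y + prec x y) z)
        ∧ (∀ x y z : D, succ x (prec y z) = prec (succ x y) z)
        ∧ (∀ x y z : D, prec x (succ y z + prec y z) = prec (prec x y) z)) := by
  constructor
  · rintro ⟨h1, h2⟩
    refine ⟨fun x y z => ?_, fun x y z => ?_, fun x y z => ?_⟩
    · have := h2 0 (by norm_num) x y z
      simp [Finset.sum_range_succ, Finset.Icc_self, hs1] at this ⊢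
      rw [this]
      simp [show Finset.Icc 0 1 = {0, 1} from rfl, Finset.sum_insert]
    · have := h1 0 1 (by norm_num) (by norm_num) x y z
      simpa using this
    · have := h2 1 (by norm_num) x y z
      simp [Finset.sum_range_succ, Finset.Icc_self, hp2] at this ⊢
      rw [← this]
    
  · rintro ⟨d1, d2, d3⟩
    constructor
    · intro i j hij hj x y z
      obtain rfl : i = 0 := by omega
      obtain rfl : j = 1 := by omega
      simpa using d2 x y z
    · intro i hi x y z
      interval_cases i
      · simp [Finset.sum_range_succ, show Finset.Icc 0 1 = {0, 1} from rfl,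
          Finset.sum_insert, d1, hs1]
      · simp [Finset.sum_range_succ, Finset.Icc_self, ← d3, hp2, add_comm]
end

section
/- Let D be a Dyck^m algebra and let r = (r_0, ..., r_l) be a composition of m+1 into l+1 positive parts. Then D equipped with the binary operations x ∗̄_i y := Σ_{j=r_0+...+r_{i-1}}^{r_0+...+r_i − 1} x *_j y (for 0 ≤ i ≤ l, indexing blocks of sizes r_0, ..., r_l) is a Dyck^l algebra. -/
def IsDyckAlgebra (K : Type*) [Field K] {D : Type*} [AddCommGroup D] [Module K D]
    (m : ℕ) (ops : ℕ → D → D → D) : Prop :=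
  (∀ i, i ≤ m → ∀ x x' y : D, ops i (x + x') y = ops i x y + ops i x' y) ∧
  (∀ i, i ≤ m → ∀ x y y' : D, ops i x (y + y') = ops i x y + ops i x y') ∧
  (∀ i, i ≤ m → ∀ (a : K) (x y : D), ops i (a • x) y = a • ops i x y) ∧
  (∀ i, i ≤ m → ∀ (a : K) (x y : D), ops i x (a • y) = a • ops i x y) ∧
  (∀ i j, i < j → j ≤ m → ∀ x y z : D, ops i x (ops j y z) = ops j (ops i x y) z) ∧
  (∀ i, i ≤ m → ∀ x y z : D,
      ∑ j ∈ Finset.range (i + 1), ops i x (ops j y z)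
        = ∑ k ∈ Finset.Icc i m, ops i (ops k x y) z)

/-- Given a composition `c` (as a function on block indices), the `i`-th block
operation `x ∗̄_i y` is the sum of the operations `ops j` over the `i`-th block. -/
def blockOp {D : Type*} [AddCommMonoid D] (c : ℕ → ℕ) (ops : ℕ → D → D → D) :
    ℕ → D → D → D :=
  fun i x y => ∑ j ∈ Finset.Ico (∑ a ∈ Finset.range i, c a)
      ((∑ a ∈ Finset.range i, c a) + c i), ops j x y

/-- Block-summing the operations of a `Dyck^m` algebra along a composition of
`m+1` into `l+1` positive parts yields a `Dyck^l` algebra. -/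
theorem dyck_blockOp_algebra {K : Type*} [Field K] {D : Type*} [AddCommGroup D]
    [Module K D] (m l : ℕ) (ops : ℕ → D → D → D)
    (halg : IsDyckAlgebra K m ops) (r : ℕ → ℕ)
    (hpos : ∀ i, i ≤ l → 0 < r i)
    (hsum : ∑ i ∈ Finset.range (l + 1), r i = m + 1) :
    IsDyckAlgebra K l (blockOp r ops) := by
  obtain ⟨hal, har, hsl, hsr, hassoc, hdyck⟩ := halg
  set S : ℕ → ℕ := fun i => ∑ a ∈ Finset.range i, r a with hSdef
  have hS : ∀ i, S (i + 1) = S i + r i := fun i => Finset.sum_range_succ r i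
  have hmono : ∀ ⦃i j : ℕ⦄, i ≤ j → S i ≤ S j := fun i j h =>
    Finset.sum_le_sum_of_subset (Finset.range_subset_range.2 h)
  have hSl : S (l + 1) = m + 1 := hsum
  have hle : ∀ ⦃p i : ℕ⦄, i ≤ l → p ∈ Finset.Ico (S i) (S (i + 1)) → p ≤ m := by
    intro p i hi hp
    have h1 := (Finset.mem_Ico.1 hp).2
    have h2 := hmono (show i + 1 ≤ l + 1 by omega)
    omega
  have hblk : ∀ i x y, blockOp r ops i x y
      = ∑ j ∈ Finset.Ico (S i) (S (i + 1)), ops j x y := by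
    intro i x y
    rw [blockOp, hS]
  have hLsum : ∀ i, i ≤ m → ∀ (y : D) (s : Finset ℕ) (f : ℕ → D),
      ops i (∑ q ∈ s, f q) y = ∑ q ∈ s, ops i (f q) y := by
    intro i hi y s f
    exact map_sum (AddMonoidHom.mk' (fun x => ops i x y) (fun a b => hal i hi a b y)) f s
  have hRsum : ∀ i, i ≤ m → ∀ (x : D) (s : Finset ℕ) (f : ℕ → D),
      ops i x (∑ q ∈ s, f q) = ∑ q ∈ s, ops i x (f q) := by
    intro i hi x s f
    exact map_sum (AddMonoidHom.mk' (fun y => ops i x y) (fun a b => har i hi x a b)) f s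
  have merge : ∀ (f : ℕ → D) (a b : ℕ), a ≤ b →
      ∑ k ∈ Finset.Ico a b, ∑ q ∈ Finset.Ico (S k) (S (k + 1)), f q
        = ∑ q ∈ Finset.Ico (S a) (S b), f q := by
    intro f a b hab
    induction b with
    | zero =>
      have : a = 0 := by omega
      subst this; simp
    | succ b ih =>
      rcases eq_or_lt_of_le hab with h | h
      · subst h; simp
      · have hab' : a ≤ b := by omega
        rw [Finset.sum_Ico_succ_top hab', ih hab',
          Finset.sum_Ico_consecutive f (hmono hab') (hmono (Nat.le_succ b))]
  refine ⟨?_, ?_, ?_, ?_, ?_, ?_⟩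
  · intro i hi x x' y
    simp only [hblk, ← Finset.sum_add_distrib]
    exact Finset.sum_congr rfl fun j hj => hal j (hle hi hj) x x' y
  · intro i hi x y y'
    simp only [hblk, ← Finset.sum_add_distrib]
    exact Finset.sum_congr rfl fun j hj => har j (hle hi hj) x y y'
  · intro i hi a x y
    simp only [hblk, Finset.smul_sum]
    exact Finset.sum_congr rfl fun j hj => hsl j (hle hi hj) a x y
  · intro i hi a x y
    simp only [hblk, Finset.smul_sum]
    exact Finset.sum_congr rfl fun j hj => hsr j (hle hi hj) a x y
  · intro i j hij hj x y z
    have hi : i ≤ l := le_of_lt (lt_of_lt_of_le hij hj)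
    simp only [hblk]
    calc ∑ p ∈ Finset.Ico (S i) (S (i + 1)),
            ops p x (∑ q ∈ Finset.Ico (S j) (S (j + 1)), ops q y z)
        = ∑ p ∈ Finset.Ico (S i) (S (i + 1)), ∑ q ∈ Finset.Ico (S j) (S (j + 1)),
            ops p x (ops q y z) :=
          Finset.sum_congr rfl fun p hp => hRsum p (hle hi hp) x _ _
      _ = ∑ q ∈ Finset.Ico (S j) (S (j + 1)), ∑ p ∈ Finset.Ico (S i) (S (i + 1)),
            ops q (ops p x y) z := by
          rw [Finset.sum_comm]
          refine Finset.sum_congr rfl fun q hq => Finset.sum_congr rfl fun p hp => ?_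
          have hpq : p < q := by
            have h1 := (Finset.mem_Ico.1 hp).2
            have h2 := (Finset.mem_Ico.1 hq).1
            have h3 := hmono (show i + 1 ≤ j from hij)
            omega
          exact hassoc p q hpq (hle hj hq) x y z
      _ = ∑ q ∈ Finset.Ico (S j) (S (j + 1)),
            ops q (∑ p ∈ Finset.Ico (S i) (S (i + 1)), ops p x y) z :=
          Finset.sum_congr rfl fun q hq => (hLsum q (hle hj hq) z _ _).symm
  · intro i hi x y z
    simp only [hblk]
    have hstep1 : ∑ j ∈ Finset.range (i + 1), ∑ p ∈ Finset.Ico (S i) (S (i + 1)),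
        ops p x (∑ q ∈ Finset.Ico (S j) (S (j + 1)), ops q y z)
        = ∑ p ∈ Finset.Ico (S i) (S (i + 1)), ∑ q ∈ Finset.Ico 0 (S (i + 1)),
            ops p x (ops q y z) := by
      rw [Finset.sum_comm]
      refine Finset.sum_congr rfl fun p hp => ?_
      have hpm : p ≤ m := hle hi hp
      have h1 : ∀ j ∈ Finset.range (i + 1),
          ops p x (∑ q ∈ Finset.Ico (S j) (S (j + 1)), ops q y z)
            = ∑ q ∈ Finset.Ico (S j) (S (j + 1)), ops p x (ops q y z) :=
        fun j _ => hRsum p hpm x _ _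
      rw [Finset.sum_congr rfl h1, Finset.range_eq_Ico,
        merge (fun q => ops p x (ops q y z)) 0 (i + 1) (Nat.zero_le _)]
      have hS0 : S 0 = 0 := by simp [hSdef]
      rw [hS0]
    have hstep2 : ∑ k ∈ Finset.Icc i l, ∑ p ∈ Finset.Ico (S i) (S (i + 1)),
        ops p (∑ u ∈ Finset.Ico (S k) (S (k + 1)), ops u x y) z
        = ∑ p ∈ Finset.Ico (S i) (S (i + 1)), ∑ u ∈ Finset.Ico (S i) (m + 1),
            ops p (ops u x y) z := by
      rw [Finset.sum_comm]
      refine Finset.sum_congr rfl fun p hp => ?_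
      have hpm : p ≤ m := hle hi hp
      have h1 : ∀ k ∈ Finset.Icc i l,
          ops p (∑ u ∈ Finset.Ico (S k) (S (k + 1)), ops u x y) z
            = ∑ u ∈ Finset.Ico (S k) (S (k + 1)), ops p (ops u x y) z :=
        fun k _ => hLsum p hpm z _ _
      rw [Finset.sum_congr rfl h1, ← Finset.Ico_add_one_right_eq_Icc,
        merge (fun u => ops p (ops u x y) z) i (l + 1) (by omega), hSl]
    rw [hstep1, hstep2]
    -- per-p splitting
    have hsplit : ∀ p ∈ Finset.Ico (S i) (S (i + 1)),
        (∑ q ∈ Finset.Ico 0 (S (i + 1)), ops p x (ops q y z))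
          = (∑ k ∈ Finset.Icc p m, ops p (ops k x y) z)
            + ∑ q ∈ Finset.Ico (S i) (S (i + 1)),
                (if p < q then ops q (ops p x y) z else 0) := by
      intro p hp
      obtain ⟨hp1, hp2⟩ := Finset.mem_Ico.1 hp
      have hpm : p ≤ m := hle hi hp
      have hcons : p + 1 ≤ S (i + 1) := hp2
      rw [← Finset.sum_Ico_consecutive (fun q => ops p x (ops q y z))
        (Nat.zero_le (p + 1)) hcons]
      congr 1
      · rw [← Finset.range_eq_Ico, hdyck p hpm x y z]
      · rw [← Finset.sum_filter]
        have hset : Finset.filter (fun q => p < q) (Finset.Ico (S i) (S (i + 1)))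
            = Finset.Ico (p + 1) (S (i + 1)) := by
          ext q
          simp only [Finset.mem_filter, Finset.mem_Ico]
          omega
        rw [hset]
        refine Finset.sum_congr rfl fun q hq => ?_
        obtain ⟨hq1, hq2⟩ := Finset.mem_Ico.1 hq
        have hqm : q ≤ m := by
          have h4 := hmono (show i + 1 ≤ l + 1 by omega)
          omega
        exact hassoc p q (by omega) hqm x y z
    have hsplit' : ∀ p ∈ Finset.Ico (S i) (S (i + 1)),
        (∑ u ∈ Finset.Ico (S i) (m + 1), ops p (ops u x y) z)
          = (∑ k ∈ Finset.Icc p m, ops p (ops k x y) z)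
            + ∑ u ∈ Finset.Ico (S i) (S (i + 1)),
                (if u < p then ops p (ops u x y) z else 0) := by
      intro p hp
      obtain ⟨hp1, hp2⟩ := Finset.mem_Ico.1 hp
      have hpm : p ≤ m := hle hi hp
      have e1 : ∑ u ∈ Finset.Ico p (m + 1), ops p (ops u x y) z
          = ∑ k ∈ Finset.Icc p m, ops p (ops k x y) z := by
        rw [Finset.Ico_add_one_right_eq_Icc]
      have hset : Finset.filter (fun u => u < p) (Finset.Ico (S i) (S (i + 1)))
          = Finset.Ico (S i) p := by
        ext u
        simp only [Finset.mem_filter, Finset.mem_Ico]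
        omega
      have e2 : ∑ u ∈ Finset.Ico (S i) p, ops p (ops u x y) z
          = ∑ u ∈ Finset.Ico (S i) (S (i + 1)),
              (if u < p then ops p (ops u x y) z else 0) := by
        rw [← hset, Finset.sum_filter]
      rw [← Finset.sum_Ico_consecutive (fun u => ops p (ops u x y) z) hp1
        (by omega : p ≤ m + 1), e1, e2]
      exact add_comm _ _
    rw [Finset.sum_congr rfl hsplit, Finset.sum_congr rfl hsplit',
      Finset.sum_add_distrib, Finset.sum_add_distrib]
    congr 1
    exact Finset.sum_comm
end

section
/- In any Dyck^m algebra, for each 0 ≤ k ≤ m−1, the operations ≻^k := Σ_{i=0}^{k} *_i and ≺^k := Σ_{i=k+1}^{m} *_i define a dendriform algebra structure. -/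
/-- `≻^k := Σ_{i=0}^k *_i`. -/
def succOp {D : Type*} [AddCommMonoid D] (k : ℕ) (ops : ℕ → D → D → D) :
    D → D → D :=
  fun x y => ∑ i ∈ Finset.range (k + 1), ops i x y

/-- `≺^k := Σ_{i=k+1}^m *_i`. -/
def precOp {D : Type*} [AddCommMonoid D] (k m : ℕ) (ops : ℕ → D → D → D) :
    D → D → D :=
  fun x y => ∑ i ∈ Finset.Icc (k + 1) m, ops i x y

/-!
Both sides of each dendriform axiom expand into double sums of terms `x *_i (y *_j z)` and
`(x *_l y) *_i z`. The mixed axiom is a sum of instances of `x *_i (y *_j z) = (x *_i y) *_j z`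
(`i ≤ k < j`). The two other axioms are instances of one identity, for an interval `[a, b)` of
indices: in `Σ_{i ∈ [a,b)} x *_i (Σ_{j < b} y *_j z)` the terms with `j ≤ i` are rewritten by the
Dyck relation and those with `j > i` by the associativity `i < j`, and what results is
`Σ_{i ∈ [a,b)} (Σ_{l ∈ [a,m]} x *_l y) *_i z` after exchanging a triangular double sum.
The first axiom is the case `[a, b) = [0, k]`, the third the case `[a, b) = [k+1, m]`.
-/

open Finset

theorem succOp_add_precOp {D : Type*} [AddCommMonoid D] {k m : ℕ} (hk : k ≤ m)
    (ops : ℕ → D → D → D) (x y : D) :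
    succOp k ops x y + precOp k m ops x y = ∑ l ∈ range (m + 1), ops l x y := by
  rw [succOp, precOp, ← Ico_add_one_right_eq_Icc]
  exact sum_range_add_sum_Ico _ (by omega)

namespace IsDyckAlgebra

variable {K : Type*} [Field K] {D : Type*} [AddCommGroup D] [Module K D] {m : ℕ}
  {ops : ℕ → D → D → D}

theorem ops_ops_of_lt (halg : IsDyckAlgebra K m ops) {i j : ℕ} (hij : i < j) (hj : j ≤ m)
    (x y z : D) : ops i x (ops j y z) = ops j (ops i x y) z :=
  halg.2.2.2.2.1 i j hij hj x y z

theorem sum_range_ops_ops (halg : IsDyckAlgebra K m ops) {i : ℕ} (hi : i ≤ m) (x y z : D) :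
    ∑ j ∈ range (i + 1), ops i x (ops j y z) = ∑ l ∈ Icc i m, ops i (ops l x y) z :=
  halg.2.2.2.2.2 i hi x y z

theorem sum_ops {ι : Type*} (halg : IsDyckAlgebra K m ops) {i : ℕ} (hi : i ≤ m)
    (s : Finset ι) (f : ι → D) (y : D) :
    ops i (∑ j ∈ s, f j) y = ∑ j ∈ s, ops i (f j) y :=
  map_sum (AddMonoidHom.mk' (ops i · y) fun x x' => halg.1 i hi x x' y) f s

theorem ops_sum {ι : Type*} (halg : IsDyckAlgebra K m ops) {i : ℕ} (hi : i ≤ m)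
    (x : D) (s : Finset ι) (f : ι → D) :
    ops i x (∑ j ∈ s, f j) = ∑ j ∈ s, ops i x (f j) :=
  map_sum (AddMonoidHom.mk' (ops i x) fun y y' => halg.2.1 i hi x y y') f s

theorem sum_ops_sum_of_lt (halg : IsDyckAlgebra K m ops) {s t : Finset ℕ}
    (hs : ∀ i ∈ s, i ≤ m) (ht : ∀ j ∈ t, j ≤ m) (hst : ∀ i ∈ s, ∀ j ∈ t, i < j)
    (x y z : D) :
    ∑ i ∈ s, ops i x (∑ j ∈ t, ops j y z) = ∑ j ∈ t, ops j (∑ i ∈ s, ops i x y) z :=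
  calc ∑ i ∈ s, ops i x (∑ j ∈ t, ops j y z)
      = ∑ i ∈ s, ∑ j ∈ t, ops j (ops i x y) z :=
        sum_congr rfl fun i hi => by
          rw [halg.ops_sum (hs i hi)]
          exact sum_congr rfl fun j hj => halg.ops_ops_of_lt (hst i hi j hj) (ht j hj) x y z
    _ = ∑ j ∈ t, ops j (∑ i ∈ s, ops i x y) z := by
        rw [sum_comm]
        exact sum_congr rfl fun j hj => (halg.sum_ops (ht j hj) _ _ _).symm

theorem ops_sum_range (halg : IsDyckAlgebra K m ops) {i b : ℕ} (hi : i < b) (hb : b ≤ m + 1)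
    (x y z : D) :
    ops i x (∑ j ∈ range b, ops j y z)
      = ∑ l ∈ Icc i m, ops i (ops l x y) z + ∑ j ∈ Ico (i + 1) b, ops j (ops i x y) z := by
  rw [halg.ops_sum (by omega), ← sum_range_add_sum_Ico _ hi, halg.sum_range_ops_ops (by omega)]
  congr 1
  refine sum_congr rfl fun j hj => ?_
  obtain ⟨hij, hjb⟩ := mem_Ico.mp hj
  exact halg.ops_ops_of_lt (by omega) (by omega) x y z

theorem sum_Ico_ops (halg : IsDyckAlgebra K m ops) {a i : ℕ} (hai : a ≤ i) (hi : i ≤ m)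
    (x y z : D) :
    ops i (∑ l ∈ Ico a (m + 1), ops l x y) z
      = ∑ l ∈ Icc i m, ops i (ops l x y) z + ∑ l ∈ Ico a i, ops i (ops l x y) z := by
  rw [halg.sum_ops hi, ← sum_Ico_consecutive _ hai (by omega : i ≤ m + 1),
    Ico_add_one_right_eq_Icc, add_comm]

theorem sum_Ico_ops_sum_range (halg : IsDyckAlgebra K m ops) {a b : ℕ} (hb : b ≤ m + 1)
    (x y z : D) :
    ∑ i ∈ Ico a b, ops i x (∑ j ∈ range b, ops j y z)
      = ∑ i ∈ Ico a b, ops i (∑ l ∈ Ico a (m + 1), ops l x y) z := by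
  have hLHS : ∑ i ∈ Ico a b, ops i x (∑ j ∈ range b, ops j y z)
      = ∑ i ∈ Ico a b, ∑ l ∈ Icc i m, ops i (ops l x y) z
        + ∑ i ∈ Ico a b, ∑ j ∈ Ico (i + 1) b, ops j (ops i x y) z := by
    rw [← sum_add_distrib]
    exact sum_congr rfl fun i hi => halg.ops_sum_range (mem_Ico.mp hi).2 hb x y z
  have hRHS : ∑ i ∈ Ico a b, ops i (∑ l ∈ Ico a (m + 1), ops l x y) z
      = ∑ i ∈ Ico a b, ∑ l ∈ Icc i m, ops i (ops l x y) z
        + ∑ i ∈ Ico a b, ∑ l ∈ Ico a i, ops i (ops l x y) z := by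
    rw [← sum_add_distrib]
    refine sum_congr rfl fun i hi => ?_
    obtain ⟨hai, hib⟩ := mem_Ico.mp hi
    exact halg.sum_Ico_ops hai (by omega) x y z
  rw [hLHS, hRHS]
  congr 1
  exact sum_comm' fun i j => by simp only [mem_Ico]; omega

end IsDyckAlgebra

/-- In any `Dyck^m` algebra, for each `0 ≤ k ≤ m−1`, the operations
`≻^k` and `≺^k` define a dendriform algebra structure. -/
theorem dyck_dendriform_pairs {K : Type*} [Field K] {D : Type*} [AddCommGroup D]
    [Module K D] (m : ℕ) (ops : ℕ → D → D → D)
    (halg : IsDyckAlgebra K m ops) (k : ℕ) (hk : k + 1 ≤ m) :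
    (∀ x y z : D, succOp k ops x (succOp k ops y z)
        = succOp k ops (succOp k ops x y + precOp k m ops x y) z)
    ∧ (∀ x y z : D, succOp k ops x (precOp k m ops y z)
        = precOp k m ops (succOp k ops x y) z)
    ∧ (∀ x y z : D, precOp k m ops x (succOp k ops y z + precOp k m ops y z)
        = precOp k m ops (precOp k m ops x y) z) := by
  refine ⟨fun x y z => ?_, fun x y z => ?_, fun x y z => ?_⟩
  · rw [succOp_add_precOp (by omega)]
    simpa only [succOp, ← range_eq_Ico] using halg.sum_Ico_ops_sum_range (a := 0) (by omega) x y z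
  · exact halg.sum_ops_sum_of_lt (fun i hi => by rw [mem_range] at hi; omega)
      (fun j hj => (mem_Icc.mp hj).2)
      (fun i hi j hj => by rw [mem_range] at hi; rw [mem_Icc] at hj; omega) x y z
  · rw [succOp_add_precOp (by omega)]
    simpa only [precOp, ← Ico_add_one_right_eq_Icc]
      using halg.sum_Ico_ops_sum_range (a := k + 1) le_rfl x y z
end

section
/- The generating series f_m(x) = Σ_{n≥1} b_{m,n} x^n counting planar binary rooted trees with n leaves whose internal vertices are colored by {*_0,...,*_m} such that for every internal vertex v with color *_i, the left child of v (if internal) has color *_j with j > i, satisfies f_m(x) = x · (1 + f_m(x))^{m+1}; consequently b_{m,n} = (1/(mn+1))·binomial((m+1)n, n) for all n ≥ 1. -/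
/-- Planar binary rooted trees with internal vertices colored by natural numbers. -/
inductive CTree : Type
  | leaf : CTree
  | node : ℕ → CTree → CTree → CTree

/-- Number of leaves of a colored tree. -/
def CTree.leaves : CTree → ℕ
  | .leaf => 1
  | .node _ l r => l.leaves + r.leaves

/-- The left-child condition: a tree is a leaf or its root color exceeds `i`. -/
def CTree.leftOK (i : ℕ) : CTree → Prop
  | .leaf => True
  | .node j _ _ => i < j

/-- Trees colored by `{0,…,m}` such that at every internal vertex with color `i`,
the left child is a leaf or has root color `j > i`. -/
def CTree.Good (m : ℕ) : CTree → Prop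
  | .leaf => True
  | .node i l r => i ≤ m ∧ CTree.leftOK i l ∧ l.Good m ∧ r.Good m

/-- `b m n`: the number of good colored trees with `n` leaves. -/
noncomputable def bCount (m n : ℕ) : ℕ := Nat.card {t : CTree // t.Good m ∧ t.leaves = n}

/-!
Write `F i` for the generating series, by number of leaves, of the good trees whose root is a
leaf or has colour at least `i`. For `i ≤ m`, a tree counted by `F i` is either counted by
`F (i + 1)`, or is a root of colour `i` carrying a left subtree counted by `F (i + 1)` and an
arbitrary good right subtree. Hence `F i = F (i + 1) * (1 + F 0)`, and since `F (m + 1) = X`,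
the series `f = F 0` satisfies `f = X (1 + f)^(m+1)`.

For `G = 1 + f` this reads `G = 1 + X G^(m+1)`, so `G^(r+1) = G^r + X G^(r+m+1)`. This recursion
on the coefficients of the powers of `G` is solved by the Raney numbers
`[Xⁿ] G^r = r / ((m+1) n + r) · C((m+1) n + r, n)`, and `r = 1` gives the Fuss–Catalan numbers.
-/

open PowerSeries Finset

section CountingSeries

variable (R : Type*) [CommSemiring R] {α β : Type*}

noncomputable def countingSeries (w : α → ℕ) : R⟦X⟧ :=
  mk fun n => (Nat.card {a // w a = n} : R)

variable {R}

theorem countingSeries_congr {w₁ : α → ℕ} {w₂ : β → ℕ} (e : α ≃ β) (h : ∀ a, w₂ (e a) = w₁ a) :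
    countingSeries R w₁ = countingSeries R w₂ := by
  ext n
  simp only [countingSeries, coeff_mk]
  rw [Nat.card_congr (e.subtypeEquiv (p := (w₁ · = n)) (q := (w₂ · = n)) fun a => by rw [h])]

theorem countingSeries_unique [Unique α] (w : α → ℕ) : countingSeries R w = X ^ w default := by
  ext n
  rw [countingSeries, coeff_mk, coeff_X_pow]
  by_cases hn : n = w default
  · subst hn
    rw [if_pos rfl, Nat.card_eq_one_iff_unique.2 ⟨inferInstance, ⟨⟨default, rfl⟩⟩⟩, Nat.cast_one]
  · have : IsEmpty {a // w a = n} := ⟨fun a => hn (by rw [← a.2, Unique.eq_default a.1])⟩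
    rw [if_neg hn, Nat.card_of_isEmpty, Nat.cast_zero]

variable (w₁ : α → ℕ) (w₂ : β → ℕ) [∀ n, Finite {a // w₁ a = n}] [∀ n, Finite {b // w₂ b = n}]

theorem countingSeries_sum :
    countingSeries R (Sum.elim w₁ w₂) = countingSeries R w₁ + countingSeries R w₂ := by
  ext n
  simp only [countingSeries, coeff_mk, map_add, Nat.card_congr Equiv.subtypeSum, Nat.card_sum,
    Sum.elim_inl, Sum.elim_inr, Nat.cast_add]

def fiberProdEquiv (n : ℕ) : {x : α × β // w₁ x.1 + w₂ x.2 = n} ≃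
    Σ k : antidiagonal n, {a // w₁ a = k.1.1} × {b // w₂ b = k.1.2} where
  toFun x := ⟨⟨(w₁ x.1.1, w₂ x.1.2), mem_antidiagonal.2 x.2⟩, ⟨x.1.1, rfl⟩, ⟨x.1.2, rfl⟩⟩
  invFun y := ⟨(y.2.1, y.2.2), by rw [y.2.1.2, y.2.2.2]; exact mem_antidiagonal.1 y.1.2⟩
  left_inv _ := rfl
  right_inv := by
    rintro ⟨⟨⟨i, j⟩, h⟩, ⟨a, ha⟩, ⟨b, hb⟩⟩
    dsimp only at ha hb
    subst ha hb
    rfl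

theorem finite_fiber_prod (n : ℕ) : Finite {x : α × β // w₁ x.1 + w₂ x.2 = n} :=
  Finite.of_equiv _ (fiberProdEquiv w₁ w₂ n).symm

theorem countingSeries_prod :
    countingSeries R (fun x : α × β => w₁ x.1 + w₂ x.2) =
      countingSeries R w₁ * countingSeries R w₂ := by
  ext n
  rw [coeff_mul, countingSeries, coeff_mk, Nat.card_congr (fiberProdEquiv w₁ w₂ n),
    Nat.card_sigma, ← Finset.sum_coe_sort (antidiagonal n), Nat.cast_sum]
  simp only [countingSeries, coeff_mk, Nat.card_prod, Nat.cast_mul]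

end CountingSeries

namespace CTree

-- `leftOK i` is definitionally `RootGE (i + 1)`.
def RootGE (i : ℕ) : CTree → Prop
  | leaf => True
  | node j _ _ => i ≤ j

theorem RootGE.of_succ {i : ℕ} : ∀ {t : CTree}, t.RootGE (i + 1) → t.RootGE i
  | leaf, _ => trivial
  | node .., h => Nat.le_of_succ_le h

theorem rootGE_zero : ∀ t : CTree, t.RootGE 0
  | leaf => trivial
  | node j _ _ => j.zero_le

theorem one_le_leaves : ∀ t : CTree, 1 ≤ t.leaves
  | leaf => le_rfl
  | node _ l _ => le_add_right l.one_le_leaves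

theorem finite_setOf_good_leaves (m n : ℕ) : {t : CTree | t.Good m ∧ t.leaves = n}.Finite := by
  induction n using Nat.strong_induction_on with
  | _ n ih =>
    set U := ⋃ k < n, {t : CTree | t.Good m ∧ t.leaves = k}
    have hU : U.Finite := (Set.finite_lt_nat n).biUnion ih
    refine ((Set.finite_singleton leaf).union (((Set.finite_Iic m).prod (hU.prod hU)).image
      fun x => node x.1 x.2.1 x.2.2)).subset ?_
    rintro (_ | ⟨c, l, r⟩) ⟨⟨hc, -, hl, hr⟩, hn⟩
    · exact Or.inl rfl
    · have := l.one_le_leaves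
      have := r.one_le_leaves
      simp only [leaves] at hn
      exact Or.inr ⟨(c, l, r), ⟨hc, Set.mem_iUnion₂.2 ⟨l.leaves, by omega, hl, rfl⟩,
        Set.mem_iUnion₂.2 ⟨r.leaves, by omega, hr, rfl⟩⟩, rfl⟩

abbrev GoodFrom (m i : ℕ) : Type := {t : CTree // t.Good m ∧ t.RootGE i}

instance (m i n : ℕ) : Finite {t : GoodFrom m i // t.1.leaves = n} :=
  have := (finite_setOf_good_leaves m n).to_subtype
  Finite.of_injective (β := {t : CTree | t.Good m ∧ t.leaves = n})
    (fun t => ⟨t.1.1, t.1.2.1, t.2⟩) fun _ _ h => by simpa [Subtype.ext_iff] using h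

instance (m : ℕ) : Unique (GoodFrom m (m + 1)) where
  default := ⟨leaf, trivial, trivial⟩
  uniq := by
    rintro ⟨_ | ⟨j, l, r⟩, hg, hr⟩
    · rfl
    · exact absurd (hg.1.trans_lt hr) (lt_irrefl _)

noncomputable def graftEquiv {m i : ℕ} (hi : i ≤ m) :
    GoodFrom m (i + 1) ⊕ GoodFrom m (i + 1) × GoodFrom m 0 ≃ GoodFrom m i := by
  refine Equiv.ofBijective (Sum.elim (fun t => ⟨t.1, t.2.1, t.2.2.of_succ⟩)
    fun lr => ⟨node i lr.1.1 lr.2.1, ⟨hi, lr.1.2.2, lr.1.2.1, lr.2.2.1⟩, le_rfl⟩) ⟨?_, ?_⟩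
  · rintro (t₁ | ⟨l₁, r₁⟩) (t₂ | ⟨l₂, r₂⟩) h <;>
      simp only [Sum.elim_inl, Sum.elim_inr, Subtype.mk.injEq] at h
    · exact congrArg Sum.inl (Subtype.ext h)
    · have := t₁.2.2
      rw [h] at this
      exact absurd this (Nat.not_succ_le_self i)
    · have := t₂.2.2
      rw [← h] at this
      exact absurd this (Nat.not_succ_le_self i)
    · obtain ⟨-, hl, hr⟩ := node.inj h
      rw [Subtype.ext hl, Subtype.ext hr]
  · rintro ⟨_ | ⟨j, l, r⟩, hg, hj⟩
    · exact ⟨.inl ⟨leaf, hg, trivial⟩, rfl⟩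
    · obtain hij | rfl := hj.lt_or_eq
      · exact ⟨.inl ⟨node j l r, hg, hij⟩, rfl⟩
      · exact ⟨.inr (⟨l, hg.2.2.1, hg.2.1⟩, ⟨r, hg.2.2.2, r.rootGE_zero⟩), rfl⟩

noncomputable def gfFrom (m i : ℕ) : ℚ⟦X⟧ := countingSeries ℚ fun t : GoodFrom m i => t.1.leaves

theorem gfFrom_succ_self (m : ℕ) : gfFrom m (m + 1) = X :=
  (countingSeries_unique _).trans (pow_one X)

theorem gfFrom_eq_gfFrom_succ_mul {m i : ℕ} (hi : i ≤ m) :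
    gfFrom m i = gfFrom m (i + 1) * (1 + gfFrom m 0) := by
  have := finite_fiber_prod (fun l : GoodFrom m (i + 1) => l.1.leaves)
    fun r : GoodFrom m 0 => r.1.leaves
  rw [gfFrom, ← countingSeries_congr (graftEquiv hi)
      (w₁ := Sum.elim (fun t => t.1.leaves) fun lr => lr.1.1.leaves + lr.2.1.leaves)
      (by rintro (_ | _) <;> rfl),
    countingSeries_sum, countingSeries_prod (fun l : GoodFrom m (i + 1) => l.1.leaves)
      fun r : GoodFrom m 0 => r.1.leaves, gfFrom, gfFrom]
  ring

theorem gfFrom_sub_eq_X_mul_pow (m : ℕ) :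
    ∀ k ≤ m + 1, gfFrom m (m + 1 - k) = X * (1 + gfFrom m 0) ^ k
  | 0, _ => by rw [Nat.sub_zero, gfFrom_succ_self, pow_zero, mul_one]
  | k + 1, hk => by
    rw [gfFrom_eq_gfFrom_succ_mul (by omega), show m + 1 - (k + 1) + 1 = m + 1 - k by omega,
      gfFrom_sub_eq_X_mul_pow m k (by omega), pow_succ, mul_assoc]

theorem gfFrom_zero_eq (m : ℕ) : gfFrom m 0 = X * (1 + gfFrom m 0) ^ (m + 1) := by
  simpa using gfFrom_sub_eq_X_mul_pow m (m + 1) le_rfl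

theorem mk_bCount_eq_gfFrom_zero (m : ℕ) : mk (fun n => (bCount m n : ℚ)) = gfFrom m 0 := by
  ext n
  rw [coeff_mk, gfFrom, countingSeries, coeff_mk, bCount,
    Nat.card_congr ((Equiv.subtypeSubtypeEquivSubtypeInter _ (leaves · = n)).trans
      (Equiv.subtypeEquivRight fun t => and_congr_left' (and_iff_left t.rootGE_zero)))]

end CTree

section LagrangeInversion

variable {p : ℕ}

section CommSemiring

variable {R : Type*} [CommSemiring R] {G : R⟦X⟧}

theorem coeff_succ_pow_succ_of_eq (hG : G = 1 + X * G ^ p) (n r : ℕ) :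
    coeff (n + 1) (G ^ (r + 1)) = coeff (n + 1) (G ^ r) + coeff n (G ^ (r + p)) := by
  have h : G ^ (r + 1) = G ^ r + X * G ^ (r + p) := by
    rw [pow_succ, pow_add]
    nth_rw 2 [hG]
    ring
  rw [h, map_add, coeff_succ_X_mul]

theorem constantCoeff_eq_one_of_eq (hG : G = 1 + X * G ^ p) : constantCoeff G = 1 := by
  rw [hG]
  simp

end CommSemiring

variable {K : Type*} [Field K] [CharZero K]

theorem mul_coeff_pow_eq_choose_of_eq {G : K⟦X⟧} (hp : 0 < p) (hG : G = 1 + X * G ^ p) (n r : ℕ) :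
    ((p * n + r : ℕ) : K) * coeff n (G ^ r) = r * (p * n + r).choose n := by
  induction n generalizing r with
  | zero => simp [coeff_zero_eq_constantCoeff, constantCoeff_eq_one_of_eq hG]
  | succ n ihn =>
    induction r with
    | zero => simp [coeff_one]
    | succ r ihr =>
      set N := p * (n + 1) + r with hN
      have hnN : n + 1 ≤ N := hN ▸ (Nat.le_mul_of_pos_left (n + 1) hp).trans le_self_add
      have hN0 : (N : K) ≠ 0 := Nat.cast_ne_zero.2 (by omega)
      have ih₂ := ihn (r + p)
      rw [show p * n + (r + p) = N by rw [hN]; ring] at ih₂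
      have hsucc : ((N + 1).choose (n + 1) : K) = N.choose n + N.choose (n + 1) := by
        exact_mod_cast Nat.choose_succ_succ' N n
      have hright : ((N.choose (n + 1) * (n + 1) : ℕ) : K) = (N.choose n * (N - n) : ℕ) :=
        congrArg _ (Nat.choose_succ_right_eq N n)
      rw [Nat.cast_mul, Nat.cast_mul, Nat.cast_sub (by omega)] at hright
      rw [coeff_succ_pow_succ_of_eq hG, show p * (n + 1) + (r + 1) = N + 1 by omega]
      apply mul_left_cancel₀ hN0
      have hNK : (N : K) = p * (n + 1) + r := by rw [hN]; push_cast; ring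
      push_cast at ihr ih₂ hsucc hright ⊢
      linear_combination (N + 1 : K) * ihr + (N + 1 : K) * ih₂ - (N * (r + 1) : K) * hsucc -
        (p : K) * hright - (N.choose n + N.choose (n + 1) : K) * hNK

theorem coeff_mul_eq_choose_of_eq {m n : ℕ} {f : K⟦X⟧}
    (hf : f = X * (1 + f) ^ (m + 1)) (hn : n ≠ 0) :
    coeff n f * (m * n + 1) = ((m + 1) * n).choose n := by
  have h := mul_coeff_pow_eq_choose_of_eq (p := m + 1) (G := 1 + f) m.succ_pos
    (congrArg (1 + ·) hf) n 1
  rw [pow_one, map_add, coeff_one, if_neg hn, zero_add, Nat.cast_one, one_mul] at h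
  have key := Nat.choose_mul_succ_eq ((m + 1) * n) n
  rw [show (m + 1) * n + 1 - n = m * n + 1 by rw [add_mul]; omega] at key
  have hN : ((m + 1) * n + 1 : K) ≠ 0 := by exact_mod_cast ((m + 1) * n).succ_ne_zero
  apply mul_left_cancel₀ hN
  have keyK : (((m + 1) * n).choose n * ((m + 1) * n + 1) : K) =
      ((m + 1) * n + 1).choose n * (m * n + 1) := by exact_mod_cast key
  push_cast at h
  linear_combination (m * n + 1 : K) * h - keyK

end LagrangeInversion

/-- The generating series `f_m(x) = Σ_{n≥1} b_{m,n} xⁿ` satisfies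
`f_m = x (1 + f_m)^{m+1}`; consequently `b_{m,n}` is the Fuss–Catalan number
`(1/(mn+1))·choose((m+1)n, n)` for all `n ≥ 1`. -/
theorem colored_trees_fuss_catalan (m : ℕ) :
    (PowerSeries.mk (fun n => (bCount m n : ℚ))
      = PowerSeries.X * (1 + PowerSeries.mk (fun n => (bCount m n : ℚ))) ^ (m + 1))
    ∧ ∀ n, 1 ≤ n → bCount m n * (m * n + 1) = Nat.choose ((m + 1) * n) n := by
  rw [CTree.mk_bCount_eq_gfFrom_zero]
  refine ⟨CTree.gfFrom_zero_eq m, fun n hn => ?_⟩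
  have h := coeff_mul_eq_choose_of_eq (CTree.gfFrom_zero_eq m) (by omega : n ≠ 0)
  rw [← CTree.mk_bCount_eq_gfFrom_zero, coeff_mk] at h
  exact_mod_cast h
end

section
/- Let d_m(x) be the unique formal power series with d_m(0)=0 satisfying x·(1+d_m(x))^{m+1} = d_m(x). Then for every 0 ≤ k ≤ m, d_m(x) = d_k( x · (1 + d_m(x))^{m−k} ). -/
/-- Composition `f ∘ g` of formal power series (intended for `g` with zero
constant term): the `n`-th coefficient is `Σ_{k≤n} (coeff k f)·(coeff n g^k)`. -/
noncomputable def pscomp (f g : PowerSeries ℚ) : PowerSeries ℚ :=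
  PowerSeries.mk fun n =>
    ∑ k ∈ Finset.range (n + 1),
      PowerSeries.coeff k f * PowerSeries.coeff n (g ^ k)

/-! Once `pscomp f g` is identified with `f.subst g`, substitution of
`g = x·(1 + d_m)^(m-k)` is a ring homomorphism, so `y = d_k ∘ g` solves
`y = g·(1 + y)^(k+1)`. So does `d_m`, since `g·(1 + d_m)^(k+1) = x·(1 + d_m)^(m+1)`.
The equation has only one solution: the difference of two solutions is `g` times a multiple
of itself, hence divisible by every power of `x`. -/

open PowerSeries

namespace PowerSeries

variable {R : Type*} [CommRing R]

theorem coeff_pow_eq_zero_of_lt {g : R⟦X⟧} (hg : constantCoeff g = 0) {n i : ℕ} (h : n < i) :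
    coeff n (g ^ i) = 0 :=
  X_pow_dvd_iff.mp (pow_dvd_pow_of_dvd (X_dvd_iff.mpr hg) i) n h

theorem eq_of_eq_mul_one_add_pow {g y₁ y₂ : R⟦X⟧} (hg : constantCoeff g = 0) (s : ℕ)
    (h₁ : y₁ = g * (1 + y₁) ^ s) (h₂ : y₂ = g * (1 + y₂) ^ s) : y₁ = y₂ := by
  have hdvd : ∀ n, (X : R⟦X⟧) ^ n ∣ y₁ - y₂ := by
    intro n
    induction n with
    | zero => simp
    | succ n ih =>
      have hdiff : y₁ - y₂ = g * ((1 + y₁) ^ s - (1 + y₂) ^ s) := by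
        rw [mul_sub, ← h₁, ← h₂]
      have hfactor : y₁ - y₂ ∣ (1 + y₁) ^ s - (1 + y₂) ^ s := by
        simpa using sub_dvd_pow_sub_pow (1 + y₁) (1 + y₂) s
      rw [hdiff, pow_succ']
      exact mul_dvd_mul (X_dvd_iff.mpr hg) (ih.trans hfactor)
  refine sub_eq_zero.mp (ext fun n => ?_)
  rw [X_pow_dvd_iff.mp (hdvd (n + 1)) n n.lt_succ_self, map_zero]

end PowerSeries

theorem pscomp_eq_subst {g : ℚ⟦X⟧} (hg : constantCoeff g = 0) (f : ℚ⟦X⟧) :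
    pscomp f g = f.subst g := by
  ext n
  rw [pscomp, coeff_mk, coeff_subst' (HasSubst.of_constantCoeff_zero' hg),
    finsum_eq_sum_of_support_subset _ (s := Finset.range (n + 1))]
  · rfl
  · intro i hi
    by_contra hin
    simp only [Finset.coe_range, Set.mem_Iio, not_lt] at hin
    exact hi (by simp [coeff_pow_eq_zero_of_lt hg hin])

theorem fussCatalan_series_comp_general (m k : ℕ) (hk : k ≤ m)
    (d : ℕ → PowerSeries ℚ)
    (heq : ∀ j, PowerSeries.X * (1 + d j) ^ (j + 1) = d j) :
    d m = pscomp (d k) (PowerSeries.X * (1 + d m) ^ (m - k)) := by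
  set g : ℚ⟦X⟧ := X * (1 + d m) ^ (m - k)
  have hg : constantCoeff g = 0 := by simp [g]
  have hdm : d m = g * (1 + d m) ^ (k + 1) := by
    rw [mul_assoc, ← pow_add, show m - k + (k + 1) = m + 1 by omega, heq m]
  have hdk : (d k).subst g = g * (1 + (d k).subst g) ^ (k + 1) := by
    rw [← coe_substAlgHom (HasSubst.of_constantCoeff_zero' hg)]
    conv_lhs => rw [← heq k]
    simp only [map_mul, map_pow, map_add, map_one, substAlgHom_X]
  rw [pscomp_eq_subst hg]
  exact eq_of_eq_mul_one_add_pow hg (k + 1) hdm hdk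

/-- For `0 ≤ k ≤ m`, the Fuss–Catalan series satisfy
`d_m(x) = d_k(x·(1 + d_m(x))^{m−k})`. -/
theorem fussCatalan_series_comp (m k : ℕ) (hk : k ≤ m)
    (d : ℕ → PowerSeries ℚ)
    (h0 : ∀ j, PowerSeries.constantCoeff (d j) = 0)
    (heq : ∀ j, PowerSeries.X * (1 + d j) ^ (j + 1) = d j) :
    d m = pscomp (d k) (PowerSeries.X * (1 + d m) ^ (m - k)) :=
  fussCatalan_series_comp_general m k hk d heq
end
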